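/- Let T be a labelled rooted tree with at least two vertices, and G = U(T) its underlying graph. Then the simplicial map U : X^T → X^G is not CULF: the square with vertical maps d_1 : X^T_2 → X^T_1 and d_1 : X^G_2 → X^G_1 and horizontal maps U_2, U_1 is not a pullback of sets. -/

import Mathlib

/-- A finite rooted tree, encoded as a finite partial order with a least element
(the root) in which the set of elements below any given vertex is totally
ordered.  Edges of the tree are the covering pairs of the order. -/
structure CutTree where
  V : Type
  [fintypeV : Fintype V]
  [decEq : DecidableEq V]
  [po : PartialOrder V]
  root : V
  root_le : ∀ v : V, root ≤ v
  lower_total : ∀ v a b : V, a ≤ v → b ≤ v → a ≤ b ∨ b ≤ a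

attribute [instance] CutTree.fintypeV CutTree.decEq CutTree.po

namespace CutTree

variable (T : CutTree)

/-- A subset of the vertices defines a lower subtree when it is downward closed. -/
def IsLower (L : Set T.V) : Prop := ∀ ⦃a b : T.V⦄, a ≤ b → b ∈ L → a ∈ L

/-- `L` defines a lower subforest of the admissible subforest with vertex set `H`. -/
def IsLowerIn (H L : Set T.V) : Prop :=
  L ⊆ H ∧ ∀ ⦃a b : T.V⦄, a ∈ H → b ∈ L → a ≤ b → a ∈ L

/-- `H` is the vertex set of an admissible subforest: a difference of two nested
downward closed sets. -/
def IsAdmissible (H : Set T.V) : Prop :=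
  ∃ A B : Set T.V, T.IsLower A ∧ T.IsLower B ∧ B ⊆ A ∧ H = A \ B

theorem isLower_empty : T.IsLower (∅ : Set T.V) := fun _ _ _ h => h.elim

theorem isAdmissible_empty : T.IsAdmissible (∅ : Set T.V) :=
  ⟨∅, ∅, T.isLower_empty, T.isLower_empty, le_rfl, by simp⟩

/-- An `n`-simplex of the 2-Segal set `X^T`: an admissible subforest `H = L 0`
together with a layering of cuts `H = L 0 ⊇ L 1 ⊇ ⋯ ⊇ L n = ∅` by lower
subforests of `H`. -/
@[ext]
structure Simplex (T : CutTree) (n : ℕ) where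
  L : Fin (n + 1) → Set T.V
  admissible : T.IsAdmissible (L 0)
  antitone : Antitone L
  lowerIn : ∀ i, T.IsLowerIn (L 0) (L i)
  last_eq : L (Fin.last n) = ∅

theorem isAdmissible_diff {H P Q : Set T.V} (hH : T.IsAdmissible H)
    (hP : T.IsLowerIn H P) (hQ : T.IsLowerIn H Q) (hQP : Q ⊆ P) :
    T.IsAdmissible (P \ Q) := by
  obtain ⟨A, B, hA, hB, hBA, rfl⟩ := hH
  have hlow : ∀ R : Set T.V, T.IsLowerIn (A \ B) R → T.IsLower (R ∪ B) := by
    rintro R ⟨hRsub, hRcl⟩ a b hab hb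
    rcases hb with hb | hb
    · have hbA : b ∈ A := (hRsub hb).1
      have haA : a ∈ A := hA hab hbA
      by_cases haB : a ∈ B
      · exact Or.inr haB
      · exact Or.inl (hRcl ⟨haA, haB⟩ hb hab)
    · exact Or.inr (hB hab hb)
  refine ⟨P ∪ B, Q ∪ B, hlow P hP, hlow Q hQ, Set.union_subset_union_left _ hQP, ?_⟩
  ext x
  constructor
  · rintro ⟨hxP, hxQ⟩
    have hxB : x ∉ B := (hP.1 hxP).2
    exact ⟨Or.inl hxP, by rintro (h | h) <;> [exact hxQ h; exact hxB h]⟩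
  · rintro ⟨hx1, hx2⟩
    rcases hx1 with hx1 | hx1
    · exact ⟨hx1, fun h => hx2 (Or.inl h)⟩
    · exact absurd (Or.inr hx1) hx2

/-- The action of a simplicial operator `α : [m] → [n]` on `X^T`. -/
def act {m n : ℕ} (α : Fin (m + 1) → Fin (n + 1)) (hα : Monotone α)
    (σ : T.Simplex n) : T.Simplex m where
  L j := σ.L (α j) \ σ.L (α (Fin.last m))
  admissible := by
    refine T.isAdmissible_diff σ.admissible (σ.lowerIn _) (σ.lowerIn _) ?_
    exact σ.antitone (hα (Fin.le_last _))
  antitone := by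
    intro j k hjk
    exact Set.diff_subset_diff_left (σ.antitone (hα hjk))
  lowerIn := by
    intro i
    constructor
    · exact Set.diff_subset_diff_left (σ.antitone (hα (Fin.zero_le _)))
    · rintro a b ⟨haL, haS⟩ ⟨hbL, _⟩ hab
      have ha0 : a ∈ σ.L 0 := (σ.lowerIn (α 0)).1 haL
      exact ⟨(σ.lowerIn (α i)).2 ha0 hbL hab, haS⟩
  last_eq := Set.diff_self

/-- The `i`-th face map `X^T_{n+1} → X^T_n`. -/
def face {n : ℕ} (i : Fin (n + 2)) : T.Simplex (n + 1) → T.Simplex n :=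
  T.act i.succAbove (Fin.strictMono_succAbove i).monotone

/-- The `i`-th degeneracy map `X^T_n → X^T_{n+1}`. -/
def degen {n : ℕ} (i : Fin (n + 1)) : T.Simplex n → T.Simplex (n + 1) :=
  T.act i.predAbove (Fin.predAbove_right_monotone i)

end CutTree


section GraphCore

variable {V : Type}

theorem telescope_iUnion {m : ℕ} (M : Fin (m + 1) → Set V) (hM : Antitone M) :
    (⋃ j : Fin m, (M j.castSucc \ M j.succ)) = M 0 \ M (Fin.last m) := by
  ext x
  simp only [Set.mem_iUnion, Set.mem_diff]
  constructor
  · rintro ⟨j, hj1, hj2⟩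
    refine ⟨hM (Fin.zero_le _) hj1, fun hx => hj2 (hM (Fin.le_last _) hx)⟩
  · rintro ⟨h0, hlast⟩
    by_contra hno
    push_neg at hno
    have hall : ∀ j : Fin (m + 1), x ∈ M j := by
      intro j
      induction j using Fin.induction with
      | zero => exact h0
      | succ j ih => exact (hno j ih)
    exact hlast (hall _)

theorem disjoint_layers {m : ℕ} (M : Fin (m + 1) → Set V) (hM : Antitone M) :
    ∀ i j : Fin m, i ≠ j →
      Disjoint (M i.castSucc \ M i.succ) (M j.castSucc \ M j.succ) := by
  have key : ∀ i j : Fin m, i < j →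
      Disjoint (M i.castSucc \ M i.succ) (M j.castSucc \ M j.succ) := by
    intro i j hij
    rw [Set.disjoint_left]
    rintro x ⟨_, hxi⟩ ⟨hxj, _⟩
    have : M j.castSucc ⊆ M i.succ := hM (by
      rw [Fin.succ_le_castSucc_iff]; exact hij)
    exact hxi (this hxj)
  intro i j hij
  rcases lt_or_gt_of_ne hij with h | h
  · exact key i j h
  · exact (key j i h).symm

/-- An `n`-simplex of the 2-Segal set `X^G` of a graph `G`: a subgraph `H`
together with an ordered partition of its vertices into `n` possibly empty
parts. -/
@[ext]
structure GSimplex {V : Type} (G : SimpleGraph V) (n : ℕ) where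
  H : G.Subgraph
  S : Fin n → Set V
  cover : (⋃ i, S i) = H.verts
  disj : ∀ i j : Fin n, i ≠ j → Disjoint (S i) (S j)

namespace GSimplex

variable {G : SimpleGraph V}

/-- The chain of "remaining" vertex sets of a partitioned subgraph:
`chain σ j` is the union of the parts with index `≥ j`. -/
def chain {n : ℕ} (σ : GSimplex G n) (j : Fin (n + 1)) : Set V :=
  ⋃ k : Fin n, if j ≤ k.castSucc then σ.S k else ∅

theorem chain_antitone {n : ℕ} (σ : GSimplex G n) : Antitone σ.chain := by
  intro j j' hjj'
  refine Set.iUnion_subset fun k => ?_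
  by_cases h : j' ≤ k.castSucc
  · simp only [h, if_pos]
    exact Set.subset_iUnion_of_subset k (by simp [hjj'.trans h])
  · simp [h]

theorem chain_zero {n : ℕ} (σ : GSimplex G n) : σ.chain 0 = σ.H.verts := by
  rw [← σ.cover]
  unfold chain

  ext k
  simp [Fin.zero_le]

theorem chain_last {n : ℕ} (σ : GSimplex G n) : σ.chain (Fin.last n) = ∅ := by
  unfold chain
  ext x
  simp only [Set.mem_iUnion, Set.mem_empty_iff_false, iff_false]
  rintro ⟨k, hk⟩
  rw [if_neg] at hk
  · exact hk
  · exact not_le.mpr (Fin.castSucc_lt_last k)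

/-- The action of a simplicial operator `α : [m] → [n]` on `X^G`:
the parts are merged or deleted according to `α`, and the subgraph is replaced
by its restriction (spanned subgraph) to the remaining vertices. -/
def act {m n : ℕ} (α : Fin (m + 1) → Fin (n + 1)) (hα : Monotone α)
    (σ : GSimplex G n) : GSimplex G m where
  H := σ.H.induce (σ.chain (α 0) \ σ.chain (α (Fin.last m)))
  S j := σ.chain (α j.castSucc) \ σ.chain (α j.succ)
  cover := by
    have := telescope_iUnion (fun j => σ.chain (α j)) (σ.chain_antitone.comp_monotone hα)
    simpa using this
  disj := disjoint_layers (fun j => σ.chain (α j)) (σ.chain_antitone.comp_monotone hα)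

/-- The `i`-th face map `X^G_{n+1} → X^G_n`. -/
def face {n : ℕ} (i : Fin (n + 2)) : GSimplex G (n + 1) → GSimplex G n :=
  act i.succAbove (Fin.strictMono_succAbove i).monotone

/-- The `i`-th degeneracy map `X^G_n → X^G_{n+1}`. -/
def degen {n : ℕ} (i : Fin (n + 1)) : GSimplex G n → GSimplex G (n + 1) :=
  act i.predAbove (Fin.predAbove_right_monotone i)

/-- The element of `X^G_1` corresponding to a subgraph `H` of `G`. -/
def ofSubgraph (H : G.Subgraph) : GSimplex G 1 where
  H := H
  S := fun _ => H.verts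
  cover := Set.iUnion_const _
  disj := fun i j hij => absurd (Subsingleton.elim i j) hij

end GSimplex

end GraphCore

namespace CutTree

variable (T : CutTree)

/-- The underlying (simple) graph of a rooted tree: the edges are the covering
pairs of the order. -/
def underlying : SimpleGraph T.V := SimpleGraph.fromRel (fun a b => a ⋖ b)

/-- The simplicial map `U : X^T → X^G` sending a layered admissible subforest to
its underlying subgraph together with the vertex partition given by the layers. -/
def Umap {n : ℕ} (σ : T.Simplex n) : GSimplex T.underlying n where
  H := (⊤ : T.underlying.Subgraph).induce (σ.L 0)
  S j := σ.L j.castSucc \ σ.L j.succ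
  cover := by
    have := telescope_iUnion σ.L σ.antitone
    rw [this, σ.last_eq]
    simp [SimpleGraph.Subgraph.induce_verts]
  disj := disjoint_layers σ.L σ.antitone

/-- The degree of a vertex in (the underlying graph of) a rooted tree. -/
noncomputable def degree (v : T.V) : ℕ := Nat.card {w : T.V // v ⋖ w ∨ w ⋖ v}

end CutTree

/-!
Over a 1-simplex of `X^T`, i.e. an admissible subforest `H` with one layer, the fibre of
`d₁` in `X^G_2` contains every ordered partition of `H` into two parts, whereas a 2-simplex
of `X^T` must have a lower subforest of `H` as its second layer. For a non-root vertex `q`,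
the subforest `H = Iic q` and the partition `(H \ {q}, {q})` therefore give a point of the
fibre product outside the image of `X^T_2`: the root lies in `H` below `q`.
-/

namespace GSimplex

variable {V : Type} {G : SimpleGraph V}

theorem eq_ofSubgraph (c : GSimplex G 1) : c = ofSubgraph c.H := by
  ext1
  · rfl
  · funext i
    rw [Subsingleton.elim i 0]
    exact (iSup_unique c.S).symm.trans c.cover

theorem face_one_eq_ofSubgraph (b : GSimplex G 2) : face 1 b = ofSubgraph b.H := by
  have hverts : b.chain 0 \ b.chain (Fin.last 2) = b.H.verts := by
    rw [b.chain_zero, b.chain_last, Set.sdiff_empty]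
  ext1
  · exact (congrArg b.H.induce hverts).trans b.H.induce_self_verts
  · funext i
    rw [Subsingleton.elim i 0]
    exact hverts

def split (H : G.Subgraph) (v : V) (hv : v ∈ H.verts) : GSimplex G 2 where
  H := H
  S := ![H.verts \ {v}, {v}]
  cover := by
    ext x
    simp only [Set.mem_iUnion, Fin.exists_fin_two, Matrix.cons_val_zero, Matrix.cons_val_one]
    grind
  disj := by
    intro i j hij
    fin_cases i <;> fin_cases j <;> simp_all

end GSimplex

namespace CutTree

variable (T : CutTree)

theorem isAdmissible_of_isLower {A : Set T.V} (hA : T.IsLower A) : T.IsAdmissible A :=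
  ⟨A, ∅, hA, T.isLower_empty, Set.empty_subset A, Set.sdiff_empty.symm⟩

theorem isLower_Iic (q : T.V) : T.IsLower (Set.Iic q) := fun _ _ hab hb => hab.trans hb

def Simplex.ofAdmissible {H : Set T.V} (hH : T.IsAdmissible H) : T.Simplex 1 where
  L := ![H, ∅]
  admissible := hH
  antitone := by
    intro i j hij
    fin_cases i <;> fin_cases j <;> simp_all
  lowerIn := by
    intro i
    fin_cases i
    · exact ⟨subset_rfl, fun _ _ ha _ _ => ha⟩
    · exact ⟨Set.empty_subset _, fun _ _ _ hb _ => hb⟩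
  last_eq := rfl

variable {T}

theorem isLowerIn_Umap_last {n : ℕ} (σ : T.Simplex (n + 1)) :
    T.IsLowerIn (T.Umap σ).H.verts ((T.Umap σ).S (Fin.last n)) := by
  have hlast : (T.Umap σ).S (Fin.last n) = σ.L (Fin.last n).castSucc := by
    change σ.L _ \ σ.L (Fin.last n).succ = _
    rw [Fin.succ_last, σ.last_eq, Set.sdiff_empty]
  rw [hlast]
  exact σ.lowerIn _

theorem Umap_ne_split (σ : T.Simplex 2) {H : T.underlying.Subgraph} {p v : T.V}
    (hv : v ∈ H.verts) (hp : p ∈ H.verts) (hpv : p < v) :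
    T.Umap σ ≠ GSimplex.split H v hv := by
  intro hσ
  have hlower := isLowerIn_Umap_last σ
  rw [hσ] at hlower
  exact hpv.ne (hlower.2 hp rfl hpv.le)

end CutTree

theorem Umap_not_CULF (T : CutTree) (hT : 1 < Nat.card T.V) :
    ¬ ((Function.Injective fun σ : T.Simplex 2 => (T.face 1 σ, T.Umap σ)) ∧
      ∀ (a : T.Simplex 1) (b : GSimplex T.underlying 2),
        T.Umap a = GSimplex.face 1 b →
          ∃ σ : T.Simplex 2, T.face 1 σ = a ∧ T.Umap σ = b) := by
  rintro ⟨-, hsurj⟩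
  have : Nontrivial T.V := Finite.one_lt_card_iff_nontrivial.mp hT
  obtain ⟨q, hq⟩ := exists_ne T.root
  let a := CutTree.Simplex.ofAdmissible T (T.isAdmissible_of_isLower (T.isLower_Iic q))
  have hqH : q ∈ (T.Umap a).H.verts := le_refl q
  have hrootH : T.root ∈ (T.Umap a).H.verts := T.root_le q
  obtain ⟨σ, -, hσ⟩ := hsurj a (GSimplex.split _ q hqH) <| by
    rw [GSimplex.face_one_eq_ofSubgraph]
    exact GSimplex.eq_ofSubgraph _
  exact CutTree.Umap_ne_split σ hqH hrootH ((T.root_le q).lt_of_ne hq.symm) hσ
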